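/- arXiv:2103.04219 — 5 statements merged into one kernel-verified Lean document; each statement's English description precedes it below -/
import Mathlib

section
/- Let F : ℝ → [0,1] be the cumulative distribution function of a probability measure ν on ℝ, and let g : [0,1] → ℝ be increasing, left-continuous and bounded. Define ξ(x) = g(F(x)) if F(x) = F(x−), and ξ(x) = (1/(F(x) − F(x−))) ∫_{F(x−)}^{F(x)} g(y) dy if F(x) > F(x−). Then ∫ ξ dν = ∫₀¹ g(y) dy. -/
open Set Filter Topology MeasureTheory

/-!
Let `Q` be the quantile function of `ν`; it pushes Lebesgue measure on `(0, 1)` forward to `ν`,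
so `∫ ξ dν = ∫₀¹ ξ (Q y) dy`. The atoms `x` of `ν` give disjoint jump intervals
`(F(x−), F(x))`, on which `Q ≡ x`; there `ξ (Q y)` is the constant `ξ x`, which is by
definition the mean of `g` over the interval. Off these intervals and their countably many
endpoints, `F((Q y)−) = F(Q y) = y`, so `ξ (Q y) = g y`.
-/

open Function ProbabilityTheory

theorem Measurable.of_eqOn_compl_countable {α β : Type*} [MeasurableSpace α]
    [MeasurableSingletonClass α] [MeasurableSpace β] {f g : α → β} {s : Set α}
    (hg : Measurable g) (hs : s.Countable) (hfg : EqOn f g sᶜ) : Measurable f := by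
  intro B hB
  have hpre : f ⁻¹' B = (g ⁻¹' B \ s) ∪ (f ⁻¹' B ∩ s) := by
    ext x
    by_cases hx : x ∈ s
    · simp [hx]
    · simp [hx, hfg hx]
  rw [hpre]
  exact ((hg hB).diff hs.measurableSet).union (hs.mono inter_subset_right).measurableSet

theorem setIntegral_eq_of_ae_eq_off_iUnion {α E ι : Type*} [MeasurableSpace α]
    [NormedAddCommGroup E] [NormedSpace ℝ E] [Countable ι] {μ : Measure α} {s : Set α}
    {t : ι → Set α} {f g : α → E} (hs : MeasurableSet s) (ht : ∀ i, MeasurableSet (t i))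
    (hts : ∀ i, t i ⊆ s) (hd : Pairwise (Disjoint on t)) (hf : IntegrableOn f s μ)
    (hg : IntegrableOn g s μ) (hpieces : ∀ i, ∫ x in t i, f x ∂μ = ∫ x in t i, g x ∂μ)
    (hoff : ∀ᵐ x ∂μ, x ∈ s \ ⋃ i, t i → f x = g x) :
    ∫ x in s, f x ∂μ = ∫ x in s, g x ∂μ := by
  have hT : MeasurableSet (⋃ i, t i) := .iUnion ht
  have hTs : ⋃ i, t i ⊆ s := iUnion_subset hts
  rw [← integral_inter_add_sdiff hT hf, ← integral_inter_add_sdiff hT hg, inter_eq_right.2 hTs,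
    integral_iUnion ht hd (hf.mono_set hTs), integral_iUnion ht hd (hg.mono_set hTs),
    tsum_congr hpieces, setIntegral_congr_ae (hs.diff hT) hoff]

namespace Monotone

variable {α β : Type*} [LinearOrder α] [ConditionallyCompleteLinearOrder β] [TopologicalSpace β]
  [OrderTopology β] {f : α → β}

theorem pairwise_disjoint_Ioo_leftLim (hf : Monotone f) :
    Pairwise (Disjoint on fun x => Ioo (leftLim f x) (f x)) := by
  refine (pairwise_disjoint_on _).2 fun x y hxy => ?_
  exact .mono Ioo_subset_Iio_self Ioo_subset_Ioi_self
    (Ioi_disjoint_Iio_of_le (hf.le_leftLim hxy)).symm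

theorem countable_setOf_leftLim_lt [DenselyOrdered β] [TopologicalSpace.SeparableSpace β]
    (hf : Monotone f) : {x | leftLim f x < f x}.Countable :=
  Set.PairwiseDisjoint.countable_of_isOpen (hf.pairwise_disjoint_Ioo_leftLim.set_pairwise _)
    (fun _ _ => isOpen_Ioo) fun _ hx => nonempty_Ioo.2 hx

end Monotone

noncomputable def tieAverage (g : ℝ → ℝ) (a b : ℝ) : ℝ :=
  if b = a then g b else (1 / (b - a)) * ∫ y in a..b, g y

section TieAverage

variable {g : ℝ → ℝ} {a b : ℝ}

theorem tieAverage_of_eq (h : b = a) : tieAverage g a b = g b := if_pos h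

theorem sub_mul_tieAverage (h : a < b) : (b - a) * tieAverage g a b = ∫ y in a..b, g y := by
  rw [tieAverage, if_neg h.ne', ← mul_assoc, mul_one_div_cancel (sub_ne_zero.2 h.ne'), one_mul]

theorem abs_tieAverage_le {M : ℝ} (hab : a ≤ b) (hM : ∀ y ∈ Icc a b, |g y| ≤ M) :
    |tieAverage g a b| ≤ M := by
  rcases hab.eq_or_lt with rfl | hlt
  · rw [tieAverage_of_eq rfl]
    exact hM a (left_mem_Icc.2 le_rfl)
  have hpos : 0 < b - a := sub_pos.2 hlt
  have hint : |∫ y in a..b, g y| ≤ M * (b - a) := by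
    simpa only [Real.norm_eq_abs, abs_of_pos hpos] using
      intervalIntegral.norm_integral_le_of_norm_le_const (f := g) fun y hy =>
        hM y (Ioc_subset_Icc_self (uIoc_of_le hab ▸ hy))
  rw [tieAverage, if_neg hlt.ne', abs_mul, abs_of_pos (one_div_pos.2 hpos)]
  calc 1 / (b - a) * |∫ y in a..b, g y| ≤ 1 / (b - a) * (M * (b - a)) := by gcongr
    _ = M := by field_simp

end TieAverage

namespace ProbabilityTheory

variable (ν : Measure ℝ)

theorem leftLim_cdf_nonneg (x : ℝ) : 0 ≤ leftLim (cdf ν) x :=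
  (cdf_nonneg ν (x - 1)).trans ((monotone_cdf ν).le_leftLim (sub_one_lt x))

theorem leftLim_cdf_eq_real [IsProbabilityMeasure ν] (x : ℝ) :
    leftLim (cdf ν) x = ν.real (Iio x) := by
  have h := (cdf ν).measure_Iio (tendsto_cdf_atBot ν) x
  rw [measure_cdf, sub_zero] at h
  rw [measureReal_def, h, ENNReal.toReal_ofReal (leftLim_cdf_nonneg ν x)]

noncomputable def quantile (y : ℝ) : ℝ := sInf {x | y ≤ cdf ν x}

variable {ν} {x y : ℝ}

theorem nonempty_setOf_le_cdf (hy : y < 1) : {x | y ≤ cdf ν x}.Nonempty :=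
  ((tendsto_cdf_atTop ν).eventually_const_le hy).exists

theorem bddBelow_setOf_le_cdf (hy : 0 < y) : BddBelow {x | y ≤ cdf ν x} := by
  obtain ⟨a, ha⟩ := eventually_atBot.1 ((tendsto_cdf_atBot ν).eventually_lt_const hy)
  exact ⟨a, fun z hz => le_of_not_ge fun hza => (ha z hza).not_ge hz⟩

theorem le_cdf_quantile (hy : y ∈ Ioo 0 1) : y ≤ cdf ν (quantile ν y) := by
  have hright : Tendsto (cdf ν) (𝓝[>] (quantile ν y)) (𝓝 (cdf ν (quantile ν y))) :=
    ((cdf ν).right_continuous _).mono Ioi_subset_Ici_self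
  refine ge_of_tendsto hright (eventually_nhdsWithin_of_forall fun z hz => ?_)
  obtain ⟨s, hs, hsz⟩ := exists_lt_of_csInf_lt (nonempty_setOf_le_cdf hy.2) hz
  exact hs.trans (monotone_cdf ν hsz.le)

theorem quantile_le_iff (hy : y ∈ Ioo 0 1) : quantile ν y ≤ x ↔ y ≤ cdf ν x :=
  ⟨fun h => (le_cdf_quantile hy).trans (monotone_cdf ν h),
    fun h => csInf_le (bddBelow_setOf_le_cdf hy.1) h⟩

theorem leftLim_cdf_quantile_le (hy : y ∈ Ioo 0 1) : leftLim (cdf ν) (quantile ν y) ≤ y :=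
  le_of_tendsto ((monotone_cdf ν).tendsto_leftLim _) (eventually_nhdsWithin_of_forall
    fun _ hz => (not_le.1 (mt (quantile_le_iff hy).2 (not_le.2 hz))).le)

theorem quantile_eq_of_mem_Ioo (hy : y ∈ Ioo (leftLim (cdf ν) x) (cdf ν x)) :
    quantile ν y = x := by
  have hy01 : y ∈ Ioo 0 1 :=
    ⟨(leftLim_cdf_nonneg ν x).trans_lt hy.1, hy.2.trans_le (cdf_le_one ν x)⟩
  refine le_antisymm ((quantile_le_iff hy01).2 hy.2.le) (le_of_not_gt fun hlt => ?_)
  linarith [le_cdf_quantile (ν := ν) hy01, (monotone_cdf ν).le_leftLim hlt, hy.1]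

theorem monotoneOn_quantile : MonotoneOn (quantile ν) (Ioo 0 1) :=
  fun _ hy _ hy' h => (quantile_le_iff hy).2 (h.trans (le_cdf_quantile hy'))

theorem aemeasurable_quantile : AEMeasurable (quantile ν) (volume.restrict (Ioo 0 1)) :=
  aemeasurable_restrict_of_monotoneOn measurableSet_Ioo monotoneOn_quantile

variable {g : ℝ → ℝ}

theorem measurable_tieAverage_cdf (hg : MonotoneOn g (Icc 0 1)) :
    Measurable fun x => tieAverage g (leftLim (cdf ν) x) (cdf ν x) := by
  have hgF : Monotone (g ∘ cdf ν) := fun x x' h =>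
    hg ⟨cdf_nonneg ν x, cdf_le_one ν x⟩ ⟨cdf_nonneg ν x', cdf_le_one ν x'⟩ (monotone_cdf ν h)
  refine hgF.measurable.of_eqOn_compl_countable (monotone_cdf ν).countable_setOf_leftLim_lt
    fun x hx => tieAverage_of_eq (le_antisymm (not_lt.1 hx) ((monotone_cdf ν).leftLim_le le_rfl))

theorem setIntegral_tieAverage_cdf_quantile {x : ℝ} (hx : leftLim (cdf ν) x < cdf ν x) :
    ∫ y in Ioo (leftLim (cdf ν) x) (cdf ν x),
        tieAverage g (leftLim (cdf ν) (quantile ν y)) (cdf ν (quantile ν y)) =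
      ∫ y in Ioo (leftLim (cdf ν) x) (cdf ν x), g y := by
  have hconst :
      EqOn (fun y => tieAverage g (leftLim (cdf ν) (quantile ν y)) (cdf ν (quantile ν y)))
        (fun _ => tieAverage g (leftLim (cdf ν) x) (cdf ν x)) (Ioo (leftLim (cdf ν) x) (cdf ν x)) :=
    fun y hy => by simp only [quantile_eq_of_mem_Ioo hy]
  rw [setIntegral_congr_fun measurableSet_Ioo hconst, setIntegral_const,
    Real.volume_real_Ioo_of_le hx.le, smul_eq_mul, sub_mul_tieAverage hx,
    intervalIntegral.integral_of_le hx.le, integral_Ioc_eq_integral_Ioo]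

theorem tieAverage_cdf_quantile_eq {y : ℝ} (hy : y ∈ Ioo 0 1)
    (hjump : ∀ x, leftLim (cdf ν) x < cdf ν x → y ∉ Icc (leftLim (cdf ν) x) (cdf ν x)) :
    tieAverage g (leftLim (cdf ν) (quantile ν y)) (cdf ν (quantile ν y)) = g y := by
  have hleft := leftLim_cdf_quantile_le (ν := ν) hy
  have hright := le_cdf_quantile (ν := ν) hy
  have hcont : cdf ν (quantile ν y) = leftLim (cdf ν) (quantile ν y) :=
    le_antisymm (not_lt.1 fun h => hjump _ h ⟨hleft, hright⟩)
      ((monotone_cdf ν).leftLim_le le_rfl)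
  rw [tieAverage_of_eq hcont, le_antisymm (hcont.trans_le hleft) hright]

theorem ae_tieAverage_cdf_quantile_eq :
    ∀ᵐ y, y ∈ Ioo 0 1 \ ⋃ x : {x // leftLim (cdf ν) x < cdf ν x},
        Ioo (leftLim (cdf ν) x) (cdf ν x) →
      tieAverage g (leftLim (cdf ν) (quantile ν y)) (cdf ν (quantile ν y)) = g y := by
  have hA := (monotone_cdf ν).countable_setOf_leftLim_lt
  have hends := ((hA.image (leftLim (cdf ν))).union (hA.image (cdf ν))).ae_notMem volume
  filter_upwards [hends] with y hy ⟨hy01, hyJ⟩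
  refine tieAverage_cdf_quantile_eq hy01 fun x hx hyx => hyJ (mem_iUnion.2 ⟨⟨x, hx⟩, ?_⟩)
  rw [← Icc_sdiff_both]
  refine ⟨hyx, ?_⟩
  rintro (h | h)
  exacts [hy (.inl ⟨x, hx, h.symm⟩), hy (.inr ⟨x, hx, h.symm⟩)]

variable [IsProbabilityMeasure ν]

theorem map_quantile : (volume.restrict (Ioo 0 1)).map (quantile ν) = ν := by
  refine (Measure.ext_of_Iic ν _ fun x => ?_).symm
  have hpre : quantile ν ⁻¹' Iic x ∩ Ioo 0 1 = Ioo 0 1 ∩ Iic (cdf ν x) := by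
    ext y
    simp only [mem_inter_iff, mem_preimage, mem_Iic]
    exact ⟨fun h => ⟨h.2, (quantile_le_iff h.2).1 h.1⟩,
      fun h => ⟨(quantile_le_iff h.1).2 h.2, h.1⟩⟩
  have hvol : volume (Ioo 0 1 ∩ Iic (cdf ν x)) = volume (Ioc 0 (cdf ν x)) := by
    have hset : Ioc 0 1 ∩ Iic (cdf ν x) = Ioc 0 (cdf ν x) := by
      rw [Ioc_inter_Iic, inf_eq_right.2 (cdf_le_one ν x)]
    rw [← hset]
    exact measure_congr (Ioo_ae_eq_Ioc.inter (ae_eq_refl _))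
  rw [Measure.map_apply_of_aemeasurable aemeasurable_quantile measurableSet_Iic,
    Measure.restrict_apply' measurableSet_Ioo, hpre, hvol, Real.volume_Ioc, sub_zero, ofReal_cdf]

theorem integral_comp_quantile {E : Type*} [NormedAddCommGroup E] [NormedSpace ℝ E] {f : ℝ → E}
    (hf : AEStronglyMeasurable f ν) : ∫ y in Ioo 0 1, f (quantile ν y) = ∫ x, f x ∂ν := by
  rw [← integral_map aemeasurable_quantile ((map_quantile (ν := ν)).symm ▸ hf), map_quantile]

theorem integrableOn_comp_quantile {E : Type*} [NormedAddCommGroup E] {f : ℝ → E}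
    (hf : Integrable f ν) : IntegrableOn (f ∘ quantile ν) (Ioo 0 1) := by
  rw [← map_quantile (ν := ν)] at hf
  exact (integrable_map_measure hf.aestronglyMeasurable aemeasurable_quantile).1 hf

theorem integrable_tieAverage_cdf (hg : MonotoneOn g (Icc 0 1)) {M : ℝ}
    (hM : ∀ y ∈ Icc 0 1, |g y| ≤ M) :
    Integrable (fun x => tieAverage g (leftLim (cdf ν) x) (cdf ν x)) ν :=
  .of_bound (measurable_tieAverage_cdf hg).aestronglyMeasurable M <| ae_of_all _ fun x =>
    abs_tieAverage_le ((monotone_cdf ν).leftLim_le le_rfl) fun y hy =>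
      hM y ⟨(leftLim_cdf_nonneg ν x).trans hy.1, hy.2.trans (cdf_le_one ν x)⟩

end ProbabilityTheory

theorem stmt5_general (ν : MeasureTheory.Measure ℝ) [MeasureTheory.IsProbabilityMeasure ν]
    (g : ℝ → ℝ)
    (hmono : MonotoneOn g (Set.Icc 0 1))
    (hbdd : ∃ M, ∀ y ∈ Set.Icc (0:ℝ) 1, |g y| ≤ M)
    (F Fm ξ : ℝ → ℝ)
    (hF : ∀ x, F x = (ν (Set.Iic x)).toReal)
    (hFm : ∀ x, Fm x = (ν (Set.Iio x)).toReal)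
    (hξ : ∀ x, ξ x = if F x = Fm x then g (F x)
      else (1/(F x - Fm x)) * ∫ y in (Fm x)..(F x), g y) :
    ∫ x, ξ x ∂ν = ∫ y in (0:ℝ)..1, g y := by
  obtain rfl : F = cdf ν := funext fun x => (hF x).trans (cdf_eq_real ν x).symm
  obtain rfl : Fm = leftLim (cdf ν) := funext fun x => (hFm x).trans (leftLim_cdf_eq_real ν x).symm
  obtain rfl : ξ = fun x => tieAverage g (leftLim (cdf ν) x) (cdf ν x) := funext hξ
  obtain ⟨M, hM⟩ := hbdd
  have hmono_uIcc : MonotoneOn g (uIcc 0 1) := by rwa [uIcc_of_le zero_le_one]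
  have : Countable {x // leftLim (cdf ν) x < cdf ν x} :=
    (monotone_cdf ν).countable_setOf_leftLim_lt.to_subtype
  rw [← integral_comp_quantile (measurable_tieAverage_cdf hmono).aestronglyMeasurable,
    intervalIntegral.integral_of_le zero_le_one, integral_Ioc_eq_integral_Ioo]
  exact setIntegral_eq_of_ae_eq_off_iUnion
    (t := fun x : {x // leftLim (cdf ν) x < cdf ν x} => Ioo (leftLim (cdf ν) x) (cdf ν x))
    measurableSet_Ioo (fun _ => measurableSet_Ioo)
    (fun x => Ioo_subset_Ioo (leftLim_cdf_nonneg ν x) (cdf_le_one ν x))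
    (fun x x' h => (monotone_cdf ν).pairwise_disjoint_Ioo_leftLim (Subtype.coe_injective.ne h))
    (integrableOn_comp_quantile (integrable_tieAverage_cdf hmono hM))
    (hmono_uIcc.intervalIntegrable.1.mono_set Ioo_subset_Ioc_self)
    (fun x => setIntegral_tieAverage_cdf_quantile x.2) ae_tieAverage_cdf_quantile_eq

/-- The tie-averaged payoff integrates to the average reward:
`∫ ξ dν = ∫₀¹ g`. -/
theorem stmt5 (ν : MeasureTheory.Measure ℝ) [MeasureTheory.IsProbabilityMeasure ν]
    (g : ℝ → ℝ)
    (hmono : MonotoneOn g (Set.Icc 0 1))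
    (hlc : ∀ y ∈ Set.Ioc (0:ℝ) 1,
      Filter.Tendsto g (nhdsWithin y (Set.Iio y)) (nhds (g y)))
    (hbdd : ∃ M, ∀ y ∈ Set.Icc (0:ℝ) 1, |g y| ≤ M)
    (F Fm ξ : ℝ → ℝ)
    (hF : ∀ x, F x = (ν (Set.Iic x)).toReal)
    (hFm : ∀ x, Fm x = (ν (Set.Iio x)).toReal)
    (hξ : ∀ x, ξ x = if F x = Fm x then g (F x)
      else (1/(F x - Fm x)) * ∫ y in (Fm x)..(F x), g y) :
    ∫ x, ξ x ∂ν = ∫ y in (0:ℝ)..1, g y :=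
  stmt5_general ν g hmono hbdd F Fm ξ hF hFm hξ
end

section
/- With g, h, R̄ as above (g increasing left-continuous bounded, R̄ = ∫₀¹ g, h continuous strictly increasing with h(0)=0 and h(∞) > (g(1)−g(0))/(R̄−g(0))), and F*(x) = g⁻¹([g(0) + (R̄ − g(0)) h(x)] ∧ g(1)), the feasibility identity ∫₀^∞ h(x) dF*(x) = 1 holds; equivalently ∫₀^{h(∞)} (1 − F*(h⁻¹(w))) dw = 1. -/
open Set Filter Topology MeasureTheory

/-!
The superlevel set `{y ∈ (0,1] | z < g y}` of the monotone `g` is an interval from `ginv z` to `1`,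
so its length is `1 - ginv (min z (g 1))`. After substituting `t = (R̄ - g 0) w`, the integral is
`(R̄ - g 0)⁻¹ ∫₀^∞ |{y ∈ (0,1] | g 0 + t < g y}| dt`, and by the layer-cake formula the last
integral is `∫₀¹ (g - g 0) = R̄ - g 0`.
-/

namespace MonotoneOn

variable {g : ℝ → ℝ} {a b : ℝ}

theorem volume_setOf_lt_inter_Ioc (hmono : MonotoneOn g (Icc a b)) (hab : a ≤ b) {z : ℝ}
    (hz : z < g b) :
    volume ({y | z < g y} ∩ Ioc a b) = ENNReal.ofReal (b - sInf {y | y ∈ Icc a b ∧ z < g y}) := by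
  set S := {y | y ∈ Icc a b ∧ z < g y}
  have hbS : b ∈ S := ⟨right_mem_Icc.2 hab, hz⟩
  have hSbdd : BddBelow S := ⟨a, fun y hy => hy.1.1⟩
  have haS : a ≤ sInf S := le_csInf ⟨b, hbS⟩ fun y hy => hy.1.1
  have hlower : Ioc (sInf S) b ⊆ {y | z < g y} ∩ Ioc a b := by
    intro y hy
    have hy' : y ∈ Icc a b := ⟨haS.trans hy.1.le, hy.2⟩
    obtain ⟨y₀, hy₀, hy₀y⟩ := exists_lt_of_csInf_lt ⟨b, hbS⟩ hy.1
    exact ⟨hy₀.2.trans_le (hmono hy₀.1 hy' hy₀y.le), haS.trans_lt hy.1, hy.2⟩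
  have hupper : {y | z < g y} ∩ Ioc a b ⊆ Icc (sInf S) b := fun y hy =>
    ⟨csInf_le hSbdd ⟨Ioc_subset_Icc_self hy.2, hy.1⟩, hy.2.2⟩
  refine le_antisymm ?_ ?_
  · simpa only [Real.volume_Icc] using measure_mono (μ := volume) hupper
  · simpa only [Real.volume_Ioc] using measure_mono (μ := volume) hlower

theorem integral_Ioi_volumeReal_superlevel (hmono : MonotoneOn g (Icc a b)) (hab : a ≤ b) :
    ∫ t in Ioi 0, volume.real ({y | g a + t < g y} ∩ Ioc a b)
      = (∫ y in a..b, g y) - (b - a) * g a := by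
  have hint : IntegrableOn g (Ioc a b) :=
    (hmono.integrableOn_isCompact isCompact_Icc).mono_set Ioc_subset_Icc_self
  have hnonneg : 0 ≤ᵐ[volume.restrict (Ioc a b)] fun y => g y - g a :=
    (ae_restrict_iff' measurableSet_Ioc).2 <| Eventually.of_forall fun y hy =>
      sub_nonneg.2 <| hmono (left_mem_Icc.2 hab) (Ioc_subset_Icc_self hy) hy.1.le
  have hsub : IntegrableOn (fun y => g y - g a) (Ioc a b) := hint.sub (integrableOn_const (by simp))
  have hlayer := hsub.integral_eq_integral_meas_lt hnonneg
  simp only [measureReal_restrict_apply' measurableSet_Ioc, lt_sub_iff_add_lt'] at hlayer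
  rw [← hlayer, integral_sub hint (integrableOn_const (by simp)), setIntegral_const,
    Real.volume_real_Ioc_of_le hab, intervalIntegral.integral_of_le hab, smul_eq_mul]

end MonotoneOn

theorem volumeReal_setOf_lt_inter_Ioc_eq_one_sub_ginv {g ginv : ℝ → ℝ}
    (hmono : MonotoneOn g (Icc 0 1))
    (hinv : ∀ z, z ≠ g 1 → ginv z = sInf {y | y ∈ Icc (0:ℝ) 1 ∧ z < g y})
    (hinv1 : ginv (g 1) = 1) (z : ℝ) :
    volume.real ({y | z < g y} ∩ Ioc 0 1) = 1 - ginv (min z (g 1)) := by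
  rcases lt_or_ge z (g 1) with hz | hz
  · have hS1 : sInf {y | y ∈ Icc (0:ℝ) 1 ∧ z < g y} ≤ 1 :=
      csInf_le ⟨0, fun y hy => hy.1.1⟩ ⟨right_mem_Icc.2 zero_le_one, hz⟩
    rw [measureReal_def, hmono.volume_setOf_lt_inter_Ioc zero_le_one hz, min_eq_left hz.le,
      hinv z hz.ne, ENNReal.toReal_ofReal (sub_nonneg.2 hS1)]
  · have hempty : {y | z < g y} ∩ Ioc 0 1 = ∅ :=
      eq_empty_of_forall_notMem fun y hy => hy.1.not_ge <| hz.trans' <|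
        hmono (Ioc_subset_Icc_self hy.2) (right_mem_Icc.2 zero_le_one) hy.2.2
    rw [hempty, min_eq_right hz, hinv1, measureReal_empty, sub_self]

theorem stmt7_general (g ginv : ℝ → ℝ) (Rbar : ℝ)
    (hmono : MonotoneOn g (Set.Icc 0 1))
    (hRbar : Rbar = ∫ y in (0:ℝ)..1, g y)
    (hRmean : Rbar ∈ Set.Ioo (g 0) (g 1))
    (hinv : ∀ z, z ≠ g 1 → ginv z = sInf {y | y ∈ Set.Icc (0:ℝ) 1 ∧ z < g y})
    (hinv1 : ginv (g 1) = 1) :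
    ∫ w in Set.Ioi (0:ℝ),
      (1 - ginv (min (g 0 + (Rbar - g 0) * w) (g 1))) ∂MeasureTheory.volume = 1 := by
  set c := Rbar - g 0
  have hc : 0 < c := sub_pos.2 hRmean.1
  calc ∫ w in Ioi 0, (1 - ginv (min (g 0 + c * w) (g 1)))
      = ∫ w in Ioi 0, volume.real ({y | g 0 + c * w < g y} ∩ Ioc 0 1) := by
        simp only [volumeReal_setOf_lt_inter_Ioc_eq_one_sub_ginv hmono hinv hinv1]
    _ = c⁻¹ * ∫ t in Ioi 0, volume.real ({y | g 0 + t < g y} ∩ Ioc 0 1) := by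
        rw [integral_comp_mul_left_Ioi (fun t => volume.real ({y | g 0 + t < g y} ∩ Ioc 0 1)) 0 hc,
          mul_zero, smul_eq_mul]
    _ = 1 := by
        rw [hmono.integral_Ioi_volumeReal_superlevel zero_le_one, ← hRbar, sub_zero, one_mul,
          inv_mul_cancel₀ hc.ne']

/-- Feasibility identity for the mean field equilibrium, in scale coordinates:
`∫₀^{h(∞)} (1 − F*(h⁻¹(w))) dw = 1`, i.e.
`∫₀^∞ (1 − g⁻¹((g(0) + (R̄−g(0))w) ∧ g(1))) dw = 1`. -/
theorem stmt7 (g ginv : ℝ → ℝ) (Rbar : ℝ)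
    (hmono : MonotoneOn g (Set.Icc 0 1))
    (hlc : ∀ y ∈ Set.Ioc (0:ℝ) 1,
      Filter.Tendsto g (nhdsWithin y (Set.Iio y)) (nhds (g y)))
    (hbdd : ∃ M, ∀ y ∈ Set.Icc (0:ℝ) 1, |g y| ≤ M)
    (hg01 : g 0 < g 1)
    (hRbar : Rbar = ∫ y in (0:ℝ)..1, g y)
    (hRmean : Rbar ∈ Set.Ioo (g 0) (g 1))
    (hinv : ∀ z, z ≠ g 1 → ginv z = sInf {y | y ∈ Set.Icc (0:ℝ) 1 ∧ z < g y})
    (hinv1 : ginv (g 1) = 1) :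
    ∫ w in Set.Ioi (0:ℝ),
      (1 - ginv (min (g 0 + (Rbar - g 0) * w) (g 1))) ∂MeasureTheory.volume = 1 :=
  stmt7_general g ginv Rbar hmono hRbar hRmean hinv hinv1
end

section
/- Let α ∈ (0,1), let h : [0,∞) → ℝ₊ be continuous and strictly increasing with h(0) = 0, and let ν be a Borel probability measure on [0,∞) with ∫ h dν ≤ 1. Let F be the cdf of ν and F₊⁻¹(1−α) = inf{x ≥ 0 : F(x) > 1−α}. Then F₊⁻¹(1−α) ≤ h⁻¹(1/α), with equality if and only if ν = (1−α)δ₀ + α δ_{h⁻¹(1/α)} (assuming 1/α is in the range of h). -/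
/-!
Markov's inequality for the increasing function `h` gives `ν[x, ∞) ≤ 1 / h x < α` for every
`x > x₁ = h⁻¹(1/α)`, so the quantile is at most `x₁`. If it equals `x₁`, then `ν[x₁, ∞) ≥ α`, and
Markov's inequality at `x₁` forces `ν[x₁, ∞) = α` and `∫ h dν ≤ h x₁ · ν[x₁, ∞)`. The function
`h - h x₁ · 𝟙[x₁, ∞)` is nonnegative on `[0, ∞)` and vanishes there only at `0` and `x₁`; its
integral is `≤ 0`, so `ν` is concentrated on `{0, x₁}`.
-/

open Set Filter Topology MeasureTheory

noncomputable section

/-- `F₊⁻¹(p) = inf {x ≥ 0 | F x > p}` for the cdf `F x = ν.real (Iic x)` of a distribution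
on `[0, ∞)`. -/
def upperQuantile (ν : Measure ℝ) (p : ℝ) : ℝ :=
  sInf {x | 0 ≤ x ∧ p < ν.real (Iic x)}

variable {ν : Measure ℝ}

lemma ae_mem_Ici_of_measure_Iio_eq_zero {a : ℝ} (hν : ν (Iio a) = 0) :
    ∀ᵐ x ∂ν, x ∈ Ici a :=
  (mem_ae_iff (s := Ici a)).2 (by rwa [compl_Ici])

lemma upperQuantile_le_of_forall_lt [IsProbabilityMeasure ν] {p a : ℝ} (ha : 0 ≤ a)
    (htail : ∀ x, a < x → ν.real (Ioi x) < 1 - p) : upperQuantile ν p ≤ a := by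
  refine le_of_forall_gt_imp_ge_of_dense fun x hx => csInf_le ⟨0, fun _ hy => hy.1⟩ ?_
  refine ⟨ha.trans hx.le, ?_⟩
  have := htail x hx
  rw [← compl_Iic, probReal_compl_eq_one_sub measurableSet_Iic] at this
  linarith

lemma one_sub_le_measureReal_Ici_of_le_upperQuantile [IsProbabilityMeasure ν] {p a : ℝ}
    (hp : 0 ≤ p) (hν : ν (Iio 0) = 0) (ha : a ≤ upperQuantile ν p) : 1 - p ≤ ν.real (Ici a) := by
  have hIic : ∀ x < a, ν (Iic x) ≤ ENNReal.ofReal p := by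
    intro x hx
    rcases lt_or_ge x 0 with hx0 | hx0
    · simp [measure_mono_null (Iic_subset_Iio.2 hx0) hν]
    · have := notMem_of_lt_csInf (hx.trans_le ha) ⟨0, fun _ hy => hy.1⟩
      simp only [mem_ofPred_eq, hx0, true_and, not_lt] at this
      exact (ENNReal.le_ofReal_iff_toReal_le (measure_ne_top _ _) hp).2 this
  have hIio : ν (Iio a) ≤ ENNReal.ofReal p := by
    obtain ⟨u, hu_mono, hu_lt, hu_lim⟩ := exists_seq_strictMono_tendsto a
    have hIic_mono : Monotone fun n => Iic (u n) :=
      fun _ _ hmn => Iic_subset_Iic.2 (hu_mono.monotone hmn)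
    rw [← iUnion_Iic_eq_Iio_of_lt_of_tendsto hu_lt hu_lim, hIic_mono.measure_iUnion]
    exact iSup_le fun n => hIic _ (hu_lt n)
  have : ν.real (Iio a) ≤ p := ENNReal.toReal_le_of_le_ofReal hp hIio
  rw [← compl_Iio, probReal_compl_eq_one_sub measurableSet_Iio]
  linarith

lemma measureReal_Ici_mul_le_integral [IsFiniteMeasure ν] {h : ℝ → ℝ} {a : ℝ}
    (hmono : MonotoneOn h (Ici a)) (hnn : 0 ≤ᵐ[ν] h) (hint : Integrable h ν) :
    ν.real (Ici a) * h a ≤ ∫ x, h x ∂ν :=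
  calc ν.real (Ici a) * h a ≤ ∫ x in Ici a, h x ∂ν :=
        setIntegral_ge_of_const_le measurableSet_Ici (measure_ne_top _ _)
          (fun _ hx => hmono self_mem_Ici hx hx) hint.integrableOn
    _ ≤ ∫ x, h x ∂ν := setIntegral_le_integral hint hnn

lemma ae_eq_zero_or_eq_of_integral_le [IsFiniteMeasure ν] {h : ℝ → ℝ} {a : ℝ} (ha : 0 ≤ a)
    (hmono : StrictMonoOn h (Ici 0)) (hh0 : h 0 = 0) (hν : ν (Iio 0) = 0)
    (hint : Integrable h ν) (hle : ∫ x, h x ∂ν ≤ ν.real (Ici a) * h a) :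
    ∀ᵐ x ∂ν, x = 0 ∨ x = a := by
  set φ : ℝ → ℝ := fun x => h x - (Ici a).indicator (fun _ => h a) x
  have hind : Integrable ((Ici a).indicator fun _ => h a) ν :=
    (integrable_const _).indicator measurableSet_Ici
  have hφ_nn : 0 ≤ᵐ[ν] φ := by
    filter_upwards [ae_mem_Ici_of_measure_Iio_eq_zero hν] with x (hx : 0 ≤ x)
    by_cases hxa : a ≤ x
    · simpa [φ, hxa] using hmono.monotoneOn ha hx hxa
    · simpa [φ, hxa, hh0] using hmono.monotoneOn self_mem_Ici hx hx
  have hφ_zero : φ =ᵐ[ν] 0 := by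
    refine (integral_eq_zero_iff_of_nonneg_ae hφ_nn (hint.sub hind)).1
      (le_antisymm ?_ (integral_nonneg_of_ae hφ_nn))
    rw [integral_sub hint hind, integral_indicator_const _ measurableSet_Ici, smul_eq_mul]
    linarith
  filter_upwards [hφ_zero, ae_mem_Ici_of_measure_Iio_eq_zero hν] with x hφx (hx : 0 ≤ x)
  by_cases hxa : a ≤ x
  · simp only [φ, hxa, indicator_of_mem, mem_Ici, Pi.zero_apply, sub_eq_zero] at hφx
    exact Or.inr (hmono.injOn hx ha hφx)
  · simp only [φ, hxa, not_false_eq_true, indicator_of_notMem, mem_Ici, Pi.zero_apply,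
      sub_zero] at hφx
    exact Or.inl (hmono.injOn hx self_mem_Ici (hφx.trans hh0.symm))

lemma eq_smul_dirac_add_smul_dirac {X : Type*} [MeasurableSpace X] [MeasurableSingletonClass X]
    {μ : Measure X} {a b : X} (hab : a ≠ b) (h : ∀ᵐ x ∂μ, x = a ∨ x = b) :
    μ = μ {a} • Measure.dirac a + μ {b} • Measure.dirac b := by
  rw [← Measure.restrict_singleton, ← Measure.restrict_singleton,
    ← Measure.restrict_union (disjoint_singleton.2 hab) (measurableSet_singleton b)]
  exact (Measure.restrict_eq_self_of_ae_mem h).symm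

lemma eq_smul_dirac_zero_add_smul_dirac_of_measureReal_Ici [IsProbabilityMeasure ν] {α a : ℝ}
    (ha : 0 < a) (hsupp : ∀ᵐ x ∂ν, x = 0 ∨ x = a) (hIci : ν.real (Ici a) = α) :
    ν = ENNReal.ofReal (1 - α) • Measure.dirac 0 + ENNReal.ofReal α • Measure.dirac a := by
  have htwo := eq_smul_dirac_add_smul_dirac ha.ne hsupp
  have hIio' : ν (Iio a) = ENNReal.ofReal (1 - α) := by
    rw [← ofReal_measureReal, ← compl_Ici, probReal_compl_eq_one_sub measurableSet_Ici, hIci]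
  have hIci' : ν (Ici a) = ENNReal.ofReal α := by rw [← ofReal_measureReal, hIci]
  have h0 : ν {0} = ν (Iio a) := by conv_rhs => rw [htwo]; simp [ha]
  have h1 : ν {a} = ν (Ici a) := by conv_rhs => rw [htwo]; simp [ha.not_ge]
  rw [htwo, h0, h1, hIio', hIci']

lemma upperQuantile_smul_dirac_add_smul_dirac {α a : ℝ} (hα : α ∈ Ioo 0 1) (ha : 0 ≤ a) :
    upperQuantile (ENNReal.ofReal (1 - α) • Measure.dirac 0 + ENNReal.ofReal α • Measure.dirac a)
      (1 - α) = a := by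
  obtain ⟨hα0, hα1⟩ := hα
  set μ := ENNReal.ofReal (1 - α) • Measure.dirac 0 + ENNReal.ofReal α • Measure.dirac a
  have hcdf : ∀ x, 0 ≤ x → (1 - α < μ.real (Iic x) ↔ a ≤ x) := by
    intro x hx
    by_cases hax : a ≤ x
    · simp [μ, measureReal_def, hx, hax, ← ENNReal.ofReal_add (sub_nonneg.2 hα1.le) hα0.le]
      linarith
    · simp [μ, measureReal_def, hx, hax, ENNReal.toReal_ofReal (sub_nonneg.2 hα1.le)]
  have hset : {x | 0 ≤ x ∧ 1 - α < μ.real (Iic x)} = Ici a := by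
    ext x
    exact ⟨fun ⟨hx, hμx⟩ => (hcdf x hx).1 hμx,
      fun hax => ⟨ha.trans hax, (hcdf x (ha.trans hax)).2 hax⟩⟩
  rw [upperQuantile, hset, csInf_Ici]

end

theorem stmt11_general (α : ℝ) (hα : α ∈ Set.Ioo (0:ℝ) 1)
    (h : ℝ → ℝ)
    (hhmono : StrictMonoOn h (Set.Ici 0))
    (hh0 : h 0 = 0)
    (hhnonneg : ∀ x ∈ Set.Ici (0:ℝ), 0 ≤ h x)
    (x₁ : ℝ) (hx₁ : 0 ≤ x₁) (hhx₁ : h x₁ = 1/α)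
    (ν : MeasureTheory.Measure ℝ) [MeasureTheory.IsProbabilityMeasure ν]
    (hsupp : ν (Set.Iio 0) = 0)
    (hint : MeasureTheory.Integrable h ν)
    (hfeas : ∫ x, h x ∂ν ≤ 1)
    (F : ℝ → ℝ) (hF : ∀ x, F x = (ν (Set.Iic x)).toReal) :
    sInf {x | 0 ≤ x ∧ 1 - α < F x} ≤ x₁ ∧
    (sInf {x | 0 ≤ x ∧ 1 - α < F x} = x₁ ↔
      ν = ENNReal.ofReal (1-α) • MeasureTheory.Measure.dirac 0
        + ENNReal.ofReal α • MeasureTheory.Measure.dirac x₁) := by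
  obtain ⟨hα0, hα1⟩ := hα
  have hquant : sInf {x | 0 ≤ x ∧ 1 - α < F x} = upperQuantile ν (1 - α) := by
    simp only [hF]; rfl
  have hx₁pos : 0 < x₁ := hx₁.lt_of_ne fun h0 => by
    rw [← h0, hh0] at hhx₁; exact (one_div_pos.2 hα0).ne hhx₁
  have hmarkov : ∀ x, 0 ≤ x → ν.real (Ici x) * h x ≤ 1 := fun x hx =>
    (measureReal_Ici_mul_le_integral (hhmono.monotoneOn.mono (Ici_subset_Ici.2 hx))
      ((ae_mem_Ici_of_measure_Iio_eq_zero hsupp).mono hhnonneg) hint).trans hfeas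
  have hbound : upperQuantile ν (1 - α) ≤ x₁ := by
    refine upperQuantile_le_of_forall_lt hx₁ fun x hx => ?_
    have hhx : 1 / α < h x := hhx₁ ▸ hhmono hx₁ (hx₁.trans hx.le) hx
    have : 1 < α * h x := by rwa [div_lt_iff₀ hα0, mul_comm] at hhx
    have := hmarkov x (hx₁.trans hx.le)
    have : ν.real (Ioi x) ≤ ν.real (Ici x) := measureReal_mono Ioi_subset_Ici_self
    nlinarith
  rw [hquant]
  refine ⟨hbound, fun heq => ?_,
    fun hν => hν ▸ upperQuantile_smul_dirac_add_smul_dirac ⟨hα0, hα1⟩ hx₁⟩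
  have hIci : ν.real (Ici x₁) = α := by
    refine le_antisymm ?_ (by simpa using
      one_sub_le_measureReal_Ici_of_le_upperQuantile (by linarith) hsupp heq.ge)
    have := hmarkov x₁ hx₁
    rwa [hhx₁, mul_one_div, div_le_one hα0] at this
  have hsupp₂ : ∀ᵐ x ∂ν, x = 0 ∨ x = x₁ :=
    ae_eq_zero_or_eq_of_integral_le hx₁ hhmono hh0 hsupp hint
      (by rwa [hIci, hhx₁, mul_one_div_cancel hα0.ne'])
  exact eq_smul_dirac_zero_add_smul_dirac_of_measureReal_Ici hx₁pos hsupp₂ hIci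

/-- Planner's problem: for any feasible distribution `ν` (i.e. `∫ h dν ≤ 1`),
the `(1−α)`-quantile `F₊⁻¹(1−α)` is at most `h⁻¹(1/α)`, with equality iff
`ν = (1−α)δ₀ + α δ_{h⁻¹(1/α)}`. -/
theorem stmt11 (α : ℝ) (hα : α ∈ Set.Ioo (0:ℝ) 1)
    (h : ℝ → ℝ)
    (hhcont : ContinuousOn h (Set.Ici 0))
    (hhmono : StrictMonoOn h (Set.Ici 0))
    (hh0 : h 0 = 0)
    (hhnonneg : ∀ x ∈ Set.Ici (0:ℝ), 0 ≤ h x)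
    (x₁ : ℝ) (hx₁ : 0 ≤ x₁) (hhx₁ : h x₁ = 1/α)
    (ν : MeasureTheory.Measure ℝ) [MeasureTheory.IsProbabilityMeasure ν]
    (hsupp : ν (Set.Iio 0) = 0)
    (hint : MeasureTheory.Integrable h ν)
    (hfeas : ∫ x, h x ∂ν ≤ 1)
    (F : ℝ → ℝ) (hF : ∀ x, F x = (ν (Set.Iic x)).toReal) :
    sInf {x | 0 ≤ x ∧ 1 - α < F x} ≤ x₁ ∧
    (sInf {x | 0 ≤ x ∧ 1 - α < F x} = x₁ ↔
      ν = ENNReal.ofReal (1-α) • MeasureTheory.Measure.dirac 0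
        + ENNReal.ofReal α • MeasureTheory.Measure.dirac x₁) :=
  stmt11_general α hα h hhmono hh0 hhnonneg x₁ hx₁ hhx₁ ν hsupp hint hfeas F hF
end

section
/- Let α ∈ (0,1), and let h : [0,∞) → ℝ₊ be continuous and strictly increasing with h(0) = 0 and h(x₁) = 1/α for some x₁ > 0. Let R(r) = (1/α) 1_{[0,α)}(r), g(y) = R(1−y), R̄ = ∫₀¹ R = 1, and let g⁻¹ be the right-continuous inverse of g. Then the general equilibrium formula F*(x) = g⁻¹([R(1) + (R̄ − R(1)) h(x)] ∧ R(0)) evaluates to the two-point cdf F*(x) = (1−α) 1_{[0, x₁)}(x) + 1_{[x₁, ∞)}(x). -/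
open Set Filter Topology

/- For `z ∈ [0, 1/α)` the superlevel set `{y ∈ [0,1] | z < g y}` of the step function
`g = (1/α)1_{(1−α,1]}` is `(1−α, 1]`, so the right-continuous inverse takes the value `1 − α`;
at the top level `z = 1/α` it is `1` by convention. The monotonicity of `h` places `h x` below or
above `1/α = h x₁` according as `x < x₁` or `x ≥ x₁`. -/

lemma sep_Icc_lt_step_eq_Ioc {α c z : ℝ} (hα : α ≤ 1) (hz : 0 ≤ z) (hzc : z < c) :
    {y | y ∈ Icc (0:ℝ) 1 ∧ z < if 1 - y < α then c else 0} = Ioc (1 - α) 1 := by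
  ext y
  simp only [mem_ofPred_eq, mem_Icc, mem_Ioc]
  by_cases hy : 1 - y < α
  · simp only [hy, if_true]
    constructor
    · rintro ⟨⟨-, hy1⟩, -⟩
      exact ⟨by linarith, hy1⟩
    · rintro ⟨hy0, hy1⟩
      exact ⟨⟨by linarith, hy1⟩, hzc⟩
  · simp only [hy, if_false]
    constructor
    · rintro ⟨-, hz0⟩
      linarith
    · rintro ⟨hy0, -⟩
      linarith

lemma sInf_sep_Icc_lt_step {α c z : ℝ} (hα : α ∈ Ioo (0:ℝ) 1) (hz : 0 ≤ z) (hzc : z < c) :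
    sInf {y | y ∈ Icc (0:ℝ) 1 ∧ z < if 1 - y < α then c else 0} = 1 - α := by
  rw [sep_Icc_lt_step_eq_Ioc hα.2.le hz hzc, csInf_Ioc (by linarith [hα.1])]

theorem stmt17_general (α : ℝ) (hα : α ∈ Set.Ioo (0:ℝ) 1)
    (h : ℝ → ℝ)
    (hhmono : StrictMonoOn h (Set.Ici 0))
    (hh0 : h 0 = 0)
    (x₁ : ℝ) (hx₁ : 0 < x₁) (hhx₁ : h x₁ = 1/α)
    (R g ginv : ℝ → ℝ)
    (hR : ∀ r, R r = if r < α then 1/α else 0)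
    (hg : ∀ y, g y = R (1 - y))
    (hinv : ∀ z, z ≠ g 1 → ginv z = sInf {y | y ∈ Set.Icc (0:ℝ) 1 ∧ z < g y})
    (hinv1 : ginv (g 1) = 1) :
    ∀ x ∈ Set.Ici (0:ℝ),
      ginv (min (R 1 + (1 - R 1) * h x) (R 0)) =
        if x < x₁ then 1 - α else 1 := by
  have hR1 : R 1 = 0 := by simp [hR, hα.2.le.not_gt]
  have hR0 : R 0 = 1/α := by simp [hR, hα.1]
  have hg1 : g 1 = 1/α := by simp [hg, hR0]
  intro x hx
  simp only [hR1, hR0, zero_add, sub_zero, one_mul]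
  split_ifs with hxx₁
  · have hx_nonneg : 0 ≤ h x := hh0 ▸ hhmono.monotoneOn self_mem_Ici hx hx
    have hx_lt : h x < 1/α := hhx₁ ▸ hhmono hx (le_of_lt (lt_of_le_of_lt hx hxx₁)) hxx₁
    rw [min_eq_left hx_lt.le, hinv _ (hg1 ▸ hx_lt.ne)]
    simp only [hg, hR]
    exact sInf_sep_Icc_lt_step hα hx_nonneg hx_lt
  · have hx_ge : 1/α ≤ h x := hhx₁ ▸ hhmono.monotoneOn hx₁.le hx (not_lt.1 hxx₁)
    rw [min_eq_right hx_ge, ← hg1, hinv1]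

/-- For the cut-off reward `R = (1/α)1_{[0,α)}`, the general mean field
equilibrium formula evaluates to the two-point cdf
`F* = (1−α)1_{[0,x₁)} + 1_{[x₁,∞)}`. -/
theorem stmt17 (α : ℝ) (hα : α ∈ Set.Ioo (0:ℝ) 1)
    (h : ℝ → ℝ)
    (hhcont : ContinuousOn h (Set.Ici 0))
    (hhmono : StrictMonoOn h (Set.Ici 0))
    (hh0 : h 0 = 0)
    (x₁ : ℝ) (hx₁ : 0 < x₁) (hhx₁ : h x₁ = 1/α)
    (R g ginv : ℝ → ℝ)
    (hR : ∀ r, R r = if r < α then 1/α else 0)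
    (hg : ∀ y, g y = R (1 - y))
    (hinv : ∀ z, z ≠ g 1 → ginv z = sInf {y | y ∈ Set.Icc (0:ℝ) 1 ∧ z < g y})
    (hinv1 : ginv (g 1) = 1) :
    ∀ x ∈ Set.Ici (0:ℝ),
      ginv (min (R 1 + (1 - R 1) * h x) (R 0)) =
        if x < x₁ then 1 - α else 1 :=
  stmt17_general α hα h hhmono hh0 x₁ hx₁ hhx₁ R g ginv hR hg hinv hinv1
end

section
/- Let g : [0,1] → ℝ be increasing, left-continuous and bounded with g(0) < g(1), R̄ = ∫₀¹ g ∈ (g(0), g(1)), let h : [0,∞) → ℝ₊ be continuous strictly increasing with h(0)=0, h(x₀)=1 and h(∞) > (g(1)−g(0))/(R̄−g(0)). Let ℓ(w) = g(0) + (R̄ − g(0)) w and F*(x) = g⁻¹(ℓ(h(x)) ∧ g(1)). Then the right-continuous inverse of F* at 1−α satisfies (F*)₊⁻¹(1−α) = h⁻¹(g((1−α)+)/(R̄ − g(0)) − g(0)/(R̄ − g(0))) whenever g is normalized with g(0)=0, R̄=1; that is, in the normalized case (F*)₊⁻¹(1−α) = h⁻¹(g((1−α)+)) for every α ∈ (0,1)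 with g((1−α)+) ≤ g(1). -/
open Set Filter Topology

/-- In the normalized case (`g(0) = 0`, `∫₀¹ g = 1`), the right-continuous
inverse of the equilibrium cdf `F* = g⁻¹(h ∧ g(1))` at `1−α` equals
`h⁻¹(g((1−α)+))`. -/
theorem stmt18 (α : ℝ) (hα : α ∈ Set.Ioo (0:ℝ) 1)
    (g ginv h Fs : ℝ → ℝ) (x₀ : ℝ) (hx₀ : 0 < x₀)
    (hmono : MonotoneOn g (Set.Icc 0 1))
    (hlc : ∀ y ∈ Set.Ioc (0:ℝ) 1,
      Filter.Tendsto g (nhdsWithin y (Set.Iio y)) (nhds (g y)))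
    (hbdd : ∃ M, ∀ y ∈ Set.Icc (0:ℝ) 1, |g y| ≤ M)
    (hg0 : g 0 = 0) (hg01 : g 0 < g 1)
    (hnorm : (∫ y in (0:ℝ)..1, g y) = 1)
    (hinv : ∀ z, z ≠ g 1 → ginv z = sInf {y | y ∈ Set.Icc (0:ℝ) 1 ∧ z < g y})
    (hinv1 : ginv (g 1) = 1)
    (hhcont : ContinuousOn h (Set.Ici 0))
    (hhmono : StrictMonoOn h (Set.Ici 0))
    (hh0 : h 0 = 0) (hhx₀ : h x₀ = 1)
    (hFs : ∀ x, Fs x = ginv (min (h x) (g 1)))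
    (L : ℝ)
    (hL : Filter.Tendsto g (nhdsWithin (1-α) (Set.Ioi (1-α))) (nhds L))
    (hLg1 : L ≤ g 1)
    (xhat : ℝ) (hxhat : 0 ≤ xhat) (hhxhat : h xhat = L) :
    sInf {x | 0 ≤ x ∧ 1 - α < Fs x} = xhat := by
  obtain ⟨hα0, hα1⟩ := hα
  have h1α0 : (0:ℝ) ≤ 1 - α := by linarith
  have h1α1 : 1 - α < 1 := by linarith
  set S := {x | 0 ≤ x ∧ 1 - α < Fs x} with hS
  -- auxiliary: L ≤ g y for y ∈ (1-α, 1]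
  have haux : ∀ y, 1 - α < y → y ≤ 1 → L ≤ g y := by
    intro y hy1 hy2
    refine le_of_tendsto hL ?_
    filter_upwards [Ioo_mem_nhdsGT_of_mem (left_mem_Ico.2 hy1)] with t ht
    exact hmono ⟨le_trans h1α0 ht.1.le, ht.2.le.trans hy2⟩
      ⟨le_trans h1α0 hy1.le, hy2⟩ ht.2.le
  -- key1 : xhat < x → x ∈ S
  have key1 : ∀ x, xhat < x → x ∈ S := by
    intro x hx
    have hx0 : (0:ℝ) ≤ x := le_trans hxhat hx.le
    refine ⟨hx0, ?_⟩
    have hLx : L < h x := by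
      rw [← hhxhat]; exact hhmono hxhat hx0 hx
    rcases le_or_gt (g 1) (h x) with hcase | hcase
    · rw [hFs, min_eq_right hcase, hinv1]; linarith
    · rw [hFs, min_eq_left hcase.le, hinv _ hcase.ne]
      have hev : ∀ᶠ t in nhdsWithin (1-α) (Set.Ioi (1-α)), g t < h x :=
        hL.eventually_lt_const hLx
      have hev2 : Set.Ioo (1-α) 1 ∈ nhdsWithin (1-α) (Set.Ioi (1-α)) :=
        Ioo_mem_nhdsGT_of_mem (left_mem_Ico.2 h1α1)
      obtain ⟨y₁, hy₁g, hy₁mem⟩ :=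
        (hev.and (eventually_of_mem hev2 fun _ ht => ht)).exists
      have hy₁Icc : y₁ ∈ Set.Icc (0:ℝ) 1 :=
        ⟨le_trans h1α0 hy₁mem.1.le, hy₁mem.2.le⟩
      have hT1 : (1:ℝ) ∈ {y | y ∈ Set.Icc (0:ℝ) 1 ∧ h x < g y} :=
        ⟨⟨zero_le_one, le_refl 1⟩, hcase⟩
      have : y₁ ≤ sInf {y | y ∈ Set.Icc (0:ℝ) 1 ∧ h x < g y} := by
        refine le_csInf ⟨1, hT1⟩ ?_
        rintro b ⟨hbIcc, hbg⟩
        by_contra hb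
        push_neg at hb
        exact absurd hbg (not_lt.2 ((hmono hbIcc hy₁Icc hb.le).trans hy₁g.le))
      linarith [hy₁mem.1]
  -- key2 : x ∈ S → xhat ≤ x
  have key2 : ∀ x ∈ S, xhat ≤ x := by
    rintro x ⟨hx0, hxFs⟩
    by_contra hx
    push_neg at hx
    have hLx : h x < L := by
      rw [← hhxhat]; exact hhmono hx0 hxhat hx
    have hxg1 : h x < g 1 := lt_of_lt_of_le hLx hLg1
    rw [hFs, min_eq_left hxg1.le, hinv _ hxg1.ne] at hxFs
    have hsub : Set.Ioc (1-α) 1 ⊆ {y | y ∈ Set.Icc (0:ℝ) 1 ∧ h x < g y} := by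
      rintro y ⟨hy1, hy2⟩
      exact ⟨⟨le_trans h1α0 hy1.le, hy2⟩, lt_of_lt_of_le hLx (haux y hy1 hy2)⟩
    have hbddT : BddBelow {y | y ∈ Set.Icc (0:ℝ) 1 ∧ h x < g y} :=
      ⟨0, fun y hy => hy.1.1⟩
    have hle : sInf {y | y ∈ Set.Icc (0:ℝ) 1 ∧ h x < g y}
        ≤ sInf (Set.Ioc (1-α) 1) :=
      csInf_le_csInf hbddT (Set.nonempty_Ioc.2 h1α1) hsub
    rw [csInf_Ioc h1α1] at hle
    linarith
  have hSne : S.Nonempty := ⟨xhat + 1, key1 _ (by linarith)⟩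
  refine le_antisymm ?_ (le_csInf hSne key2)
  have hsub2 : Set.Ioi xhat ⊆ S := fun x hx => key1 x hx
  calc sInf S ≤ sInf (Set.Ioi xhat) :=
        csInf_le_csInf ⟨xhat, key2⟩ (Set.nonempty_Ioi) hsub2
    _ = xhat := csInf_Ioi
end
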